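/- arXiv:1405.7504 — 2 statements merged into one kernel-verified Lean document; each statement's English description precedes it below -/
import Mathlib

section
/- Every finite simple MV-algebra is isomorphic to Łₙ for some positive natural number n; that is, if A is a finite simple MV-algebra, then there exist n ≥ 1 and a bijective homomorphism from A onto Łₙ. -/
universe u v

/-- An MV-algebra: operations ⊕, ¬, 0 satisfying MV1–MV6. -/
structure MVAlgebra (A : Type u) where
  oplus : A → A → A
  neg : A → A
  zero : A
  mv1 : ∀ x y z, oplus (oplus x y) z = oplus x (oplus y z)
  mv2 : ∀ x y, oplus x y = oplus y x
  mv3 : ∀ x, oplus x zero = x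
  mv4 : ∀ x, neg (neg x) = x
  mv5 : ∀ x, oplus x (neg zero) = neg zero
  mv6 : ∀ x y, oplus (neg (oplus (neg x) y)) y = oplus (neg (oplus x (neg y))) x

/-- The carrier of the Łukasiewicz chain Łₙ : {k/n : k ∈ ℕ, 0 ≤ k ≤ n} ⊆ ℚ. -/
abbrev Luk (n : ℕ+) : Type := {x : ℚ // ∃ k : ℕ, k ≤ (n : ℕ) ∧ x = (k : ℚ) / (n : ℕ)}

/-- The constant 0 of Łₙ. -/
def lukZero (n : ℕ+) : Luk n := ⟨0, 0, Nat.zero_le _, by simp⟩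

/-- The negation ¬x = 1 - x of Łₙ. -/
def lukNeg {n : ℕ+} (x : Luk n) : Luk n :=
  ⟨1 - x.1, by
    obtain ⟨k, hk, hx⟩ := x.2
    refine ⟨(n : ℕ) - k, Nat.sub_le _ _, ?_⟩
    have hn : ((n : ℕ) : ℚ) ≠ 0 := by exact_mod_cast n.pos.ne'
    rw [hx, Nat.cast_sub hk, sub_div, div_self hn]⟩

/-- The truncated sum x ⊕ y = min 1 (x + y) of Łₙ. -/
def lukOplus {n : ℕ+} (x y : Luk n) : Luk n :=
  ⟨min 1 (x.1 + y.1), by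
    obtain ⟨k, hk, hx⟩ := x.2
    obtain ⟨j, hj, hy⟩ := y.2
    refine ⟨min (n : ℕ) (k + j), min_le_left _ _, ?_⟩
    have hn : (0 : ℚ) < ((n : ℕ) : ℚ) := by exact_mod_cast n.pos
    rw [hx, hy, ← add_div]
    rcases le_total (k + j) (n : ℕ) with h | h
    · rw [min_eq_right h, min_eq_right]
      · push_cast; ring_nf
      · rw [div_le_one hn]; exact_mod_cast h
    · rw [min_eq_left h, min_eq_left, div_self hn.ne']
      · rw [one_le_div hn]; exact_mod_cast h⟩

/-- A congruence of an MV-algebra: an equivalence relation compatible with ⊕ and ¬. -/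
def IsMVCongruence {A : Type u} (M : MVAlgebra A) (θ : A → A → Prop) : Prop :=
  Equivalence θ ∧ (∀ a b c d, θ a b → θ c d → θ (M.oplus a c) (M.oplus b d)) ∧
    ∀ a b, θ a b → θ (M.neg a) (M.neg b)

/-- A simple MV-algebra: it has exactly two congruences, equality and the all relation. -/
def IsSimpleMV {A : Type u} (M : MVAlgebra A) : Prop :=
  (fun a b : A => a = b) ≠ (fun _ _ => True) ∧
    ∀ θ, IsMVCongruence M θ → θ = (fun a b : A => a = b) ∨ θ = fun _ _ => True

/-!
A simple MV-algebra is archimedean: for `x ≠ 0` the relation "`a ≤ b ⊕ k x` and `b ≤ a ⊕ k x`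
for some `k`" is a congruence (the one of the ideal generated by `x`) relating `x` and `0`, so it
is the all relation and relates `1` and `0`, i.e. `k x = 1`. In a finite simple algebra take `p`
minimal among the nonzero elements. For `y ≠ 0`, either `p ⊖ y = 0`, i.e. `p ≤ y`, or minimality
gives `p ≤ p ⊖ y`, which iterates to `p ≤ p ⊖ k y = p ⊖ 1 = 0`. So `p` lies below every nonzero
element, hence every element is a multiple `k p`: if `k p ≤ x ≠ k p` then `p ≤ x ⊖ k p` and
`(k + 1) p ≤ x`. With `n` least such that `n p = 1`, the multiples `0, p, …, n p` are distinct,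
`k p ⊕ j p = (min n (k + j)) p` and `¬(j p) = (n - j) p`, so `k p ↦ k / n` is an isomorphism
onto `Łₙ`.
-/

def lukOfNat (n : ℕ+) (k : ℕ) (hk : k ≤ (n : ℕ)) : Luk n := ⟨k / n, k, hk, rfl⟩

section LukOfNat

variable {n : ℕ+}

theorem lukOfNat_inj {i j : ℕ} {hi : i ≤ (n : ℕ)} {hj : j ≤ (n : ℕ)} :
    lukOfNat n i hi = lukOfNat n j hj ↔ i = j := by
  have hn : ((n : ℕ) : ℚ) ≠ 0 := by exact_mod_cast n.pos.ne'
  refine ⟨fun h => ?_, fun h => by subst h; rfl⟩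
  exact_mod_cast (div_left_inj' hn).1 (congrArg Subtype.val h)

theorem lukZero_eq : lukZero n = lukOfNat n 0 (Nat.zero_le _) :=
  Subtype.ext (by simp [lukZero, lukOfNat])

theorem lukOplus_lukOfNat {i j : ℕ} (hi : i ≤ (n : ℕ)) (hj : j ≤ (n : ℕ)) :
    lukOplus (lukOfNat n i hi) (lukOfNat n j hj) =
      lukOfNat n (min n (i + j)) (min_le_left _ _) := by
  have hn : (0 : ℚ) < (n : ℕ) := by exact_mod_cast n.pos
  apply Subtype.ext
  simp only [lukOplus, lukOfNat, Nat.cast_min, Nat.cast_add]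
  rw [← min_div_div_right hn.le, div_self hn.ne', add_div]

theorem lukNeg_lukOfNat {j : ℕ} (hj : j ≤ (n : ℕ)) :
    lukNeg (lukOfNat n j hj) = lukOfNat n (n - j) (Nat.sub_le _ _) := by
  have hn : ((n : ℕ) : ℚ) ≠ 0 := by exact_mod_cast n.pos.ne'
  apply Subtype.ext
  simp only [lukNeg, lukOfNat]
  rw [Nat.cast_sub hj, sub_div, div_self hn]

end LukOfNat

namespace MVAlgebra

variable {A : Type u} (M : MVAlgebra A)

def one : A := M.neg M.zero

def le (x y : A) : Prop := M.oplus (M.neg x) y = M.one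

def sub (x y : A) : A := M.neg (M.oplus (M.neg x) y)

def nsmul : ℕ → A → A
  | 0, _ => M.zero
  | k + 1, x => M.oplus x (nsmul k x)

theorem nsmul_zero (x : A) : M.nsmul 0 x = M.zero := rfl

theorem nsmul_succ (k : ℕ) (x : A) : M.nsmul (k + 1) x = M.oplus x (M.nsmul k x) := rfl

theorem zero_oplus (x : A) : M.oplus M.zero x = x := by
  rw [M.mv2, M.mv3]

theorem oplus_one (x : A) : M.oplus x M.one = M.one := M.mv5 x

theorem one_oplus (x : A) : M.oplus M.one x = M.one := by
  rw [M.mv2, oplus_one]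

theorem neg_one : M.neg M.one = M.zero := M.mv4 M.zero

theorem oplus_left_comm (x y z : A) : M.oplus x (M.oplus y z) = M.oplus y (M.oplus x z) := by
  rw [← M.mv1, M.mv2 x y, M.mv1]

theorem oplus_oplus_oplus_comm (a b c d : A) :
    M.oplus (M.oplus a b) (M.oplus c d) = M.oplus (M.oplus a c) (M.oplus b d) := by
  rw [M.mv1, M.oplus_left_comm b c d, ← M.mv1]

theorem neg_oplus_self (x : A) : M.oplus (M.neg x) x = M.one := by
  have h := M.mv6 x M.one
  rw [oplus_one, neg_one, M.mv3] at h
  exact h.symm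

theorem le_refl (x : A) : M.le x x := M.neg_oplus_self x

theorem zero_le (x : A) : M.le M.zero x := M.one_oplus x

theorem eq_one_of_one_le {x : A} (h : M.le M.one x) : x = M.one := by
  rwa [le, neg_one, zero_oplus] at h

theorem neg_le_iff {x y : A} : M.le (M.neg x) y ↔ M.oplus x y = M.one := by
  rw [le, M.mv4]

theorem neg_le_neg_iff {x y : A} : M.le (M.neg y) (M.neg x) ↔ M.le x y := by
  rw [neg_le_iff, M.mv2, le]

theorem le_oplus_iff_neg_le {a b c : A} :
    M.le a (M.oplus b c) ↔ M.le (M.neg b) (M.oplus (M.neg a) c) := by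
  rw [neg_le_iff, le, oplus_left_comm]

theorem le_oplus_right (x z : A) : M.le x (M.oplus x z) := by
  rw [le, ← M.mv1, neg_oplus_self, one_oplus]

theorem sub_eq_zero_iff_le {x y : A} : M.sub x y = M.zero ↔ M.le x y := by
  constructor
  · intro h
    rw [le, ← M.mv4 (M.oplus _ _)]
    exact congrArg M.neg h
  · intro h
    rw [sub, show M.oplus (M.neg x) y = M.one from h, neg_one]

theorem sub_oplus_cancel {x y : A} (h : M.le y x) : M.oplus (M.sub x y) y = x := by
  rw [sub, M.mv6, M.mv2 x, show M.oplus (M.neg y) x = M.one from h, neg_one, zero_oplus]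

theorem le_iff_exists_oplus {x y : A} : M.le x y ↔ ∃ z, y = M.oplus x z := by
  constructor
  · intro h
    exact ⟨M.sub y x, by rw [M.mv2, M.sub_oplus_cancel h]⟩
  · rintro ⟨z, rfl⟩
    exact M.le_oplus_right x z

theorem le_trans {x y z : A} (hxy : M.le x y) (hyz : M.le y z) : M.le x z := by
  obtain ⟨a, rfl⟩ := M.le_iff_exists_oplus.1 hxy
  obtain ⟨b, rfl⟩ := M.le_iff_exists_oplus.1 hyz
  rw [M.mv1]
  exact M.le_oplus_right x _

theorem le_antisymm {x y : A} (hxy : M.le x y) (hyx : M.le y x) : x = y := by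
  rw [← M.sub_oplus_cancel hyx, M.sub_eq_zero_iff_le.2 hxy, zero_oplus]

theorem eq_zero_of_le_zero {x : A} (h : M.le x M.zero) : x = M.zero :=
  M.le_antisymm h (M.zero_le x)

theorem oplus_le_oplus {x y u v : A} (hxy : M.le x y) (huv : M.le u v) :
    M.le (M.oplus x u) (M.oplus y v) := by
  obtain ⟨a, rfl⟩ := M.le_iff_exists_oplus.1 hxy
  obtain ⟨b, rfl⟩ := M.le_iff_exists_oplus.1 huv
  rw [M.oplus_oplus_oplus_comm]
  exact M.le_oplus_right _ _

theorem sub_le (x y : A) : M.le (M.sub x y) x := by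
  rw [sub, le, M.mv4, M.mv2, ← M.mv1, M.mv2 x, neg_oplus_self, one_oplus]

theorem sub_le_sub_right {x x' : A} (h : M.le x x') (y : A) : M.le (M.sub x y) (M.sub x' y) :=
  M.neg_le_neg_iff.2 (M.oplus_le_oplus (M.neg_le_neg_iff.2 h) (M.le_refl y))

theorem sub_zero (x : A) : M.sub x M.zero = x := by
  rw [sub, M.mv3, M.mv4]

theorem sub_one (x : A) : M.sub x M.one = M.zero := by
  rw [sub, oplus_one, neg_one]

theorem sub_sub (x y z : A) : M.sub (M.sub x y) z = M.sub x (M.oplus y z) := by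
  rw [sub, sub, sub, M.mv4, M.mv1]

theorem nsmul_add (a b : ℕ) (x : A) :
    M.nsmul (a + b) x = M.oplus (M.nsmul a x) (M.nsmul b x) := by
  induction a with
  | zero => rw [Nat.zero_add, nsmul_zero, zero_oplus]
  | succ a ih => rw [Nat.add_right_comm, nsmul_succ, nsmul_succ, ih, M.mv1]

theorem nsmul_le_nsmul (x : A) {a b : ℕ} (h : a ≤ b) : M.le (M.nsmul a x) (M.nsmul b x) := by
  obtain ⟨c, rfl⟩ := Nat.exists_eq_add_of_le h
  rw [nsmul_add]
  exact M.le_oplus_right _ _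

theorem nsmul_eq_one_of_le {x : A} {a b : ℕ} (ha : M.nsmul a x = M.one) (h : a ≤ b) :
    M.nsmul b x = M.one :=
  M.eq_one_of_one_le (ha ▸ M.nsmul_le_nsmul x h)

theorem nsmul_eq_of_nsmul_succ_eq {x : A} {i : ℕ} (h : M.nsmul (i + 1) x = M.nsmul i x)
    {m : ℕ} (hm : i ≤ m) : M.nsmul m x = M.nsmul i x := by
  induction m, hm using Nat.le_induction with
  | base => rfl
  | succ m _ ih => rw [nsmul_succ, ih, ← nsmul_succ, h]

def principalCongr (x a b : A) : Prop :=
  ∃ k, M.le a (M.oplus b (M.nsmul k x)) ∧ M.le b (M.oplus a (M.nsmul k x))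

theorem le_oplus_nsmul_trans {x a b c : A} {k j : ℕ} (hab : M.le a (M.oplus b (M.nsmul k x)))
    (hbc : M.le b (M.oplus c (M.nsmul j x))) : M.le a (M.oplus c (M.nsmul (j + k) x)) := by
  refine M.le_trans hab (M.le_trans (M.oplus_le_oplus hbc (M.le_refl _)) ?_)
  rw [M.mv1, ← nsmul_add]
  exact M.le_refl _

theorem isMVCongruence_principalCongr (x : A) : IsMVCongruence M (M.principalCongr x) := by
  refine ⟨⟨fun a => ⟨0, ?_, ?_⟩, fun ⟨k, h₁, h₂⟩ => ⟨k, h₂, h₁⟩, ?_⟩, ?_, ?_⟩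
  · rw [nsmul_zero, M.mv3]; exact M.le_refl a
  · rw [nsmul_zero, M.mv3]; exact M.le_refl a
  · rintro a b c ⟨k, hab, hba⟩ ⟨j, hbc, hcb⟩
    exact ⟨j + k, M.le_oplus_nsmul_trans hab hbc, by
      rw [Nat.add_comm]; exact M.le_oplus_nsmul_trans hcb hba⟩
  · rintro a b c d ⟨k, hab, hba⟩ ⟨j, hcd, hdc⟩
    refine ⟨k + j, ?_, ?_⟩
    · rw [nsmul_add, ← M.oplus_oplus_oplus_comm]; exact M.oplus_le_oplus hab hcd
    · rw [nsmul_add, ← M.oplus_oplus_oplus_comm]; exact M.oplus_le_oplus hba hdc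
  · rintro a b ⟨k, hab, hba⟩
    exact ⟨k, M.le_oplus_iff_neg_le.1 hba, M.le_oplus_iff_neg_le.1 hab⟩

theorem zero_ne_one (hs : IsSimpleMV M) : M.zero ≠ M.one := by
  intro h
  refine hs.1 (funext₂ fun a b => propext ⟨fun _ => trivial, fun _ => ?_⟩)
  rw [← M.mv3 a, ← M.mv3 b, h, oplus_one, oplus_one]

theorem exists_nsmul_eq_one (hs : IsSimpleMV M) {x : A} (hx : x ≠ M.zero) :
    ∃ k, M.nsmul k x = M.one := by
  rcases hs.2 _ (M.isMVCongruence_principalCongr x) with h | h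
  · have hx0 : M.principalCongr x x M.zero :=
      ⟨1, by rw [zero_oplus, nsmul_succ, nsmul_zero, M.mv3]; exact M.le_refl x, M.zero_le _⟩
    exact absurd ((congrFun₂ h x M.zero).mp hx0) hx
  · obtain ⟨k, h1, -⟩ := (congrFun₂ h M.one M.zero).mpr trivial
    exact ⟨k, M.eq_one_of_one_le (by rwa [zero_oplus] at h1)⟩

theorem eq_zero_of_le_sub {x y : A} (h : M.le x (M.sub x y)) {k : ℕ}
    (hk : M.nsmul k y = M.one) : x = M.zero := by
  have hle : ∀ k, M.le x (M.sub x (M.nsmul k y)) := by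
    intro k
    induction k with
    | zero => rw [nsmul_zero, sub_zero]; exact M.le_refl x
    | succ k ih =>
      refine M.le_trans h (M.le_trans (M.sub_le_sub_right ih y) ?_)
      rw [sub_sub, nsmul_succ, M.mv2]
      exact M.le_refl _
  have hx := hle k
  rw [hk, sub_one] at hx
  exact M.eq_zero_of_le_zero hx

theorem le_of_ne_zero_of_minimal (hs : IsSimpleMV M) {p : A}
    (hmin : ∀ q, q ≠ M.zero → M.le q p → M.le p q) {y : A} (hy : y ≠ M.zero) : M.le p y := by
  by_cases hpy : M.sub p y = M.zero
  · exact M.sub_eq_zero_iff_le.1 hpy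
  · obtain ⟨k, hk⟩ := M.exists_nsmul_eq_one hs hy
    rw [M.eq_zero_of_le_sub (hmin _ hpy (M.sub_le p y)) hk]
    exact M.zero_le y

theorem exists_least_ne_zero [Finite A] (hs : IsSimpleMV M) :
    ∃ p, p ≠ M.zero ∧ ∀ y, y ≠ M.zero → M.le p y := by
  let _ : LE A := ⟨M.le⟩
  have : IsTrans A (· ≤ ·) := ⟨fun _ _ _ => M.le_trans⟩
  obtain ⟨p, hp, hmin⟩ := (Set.toFinite {x : A | x ≠ M.zero}).exists_minimal
    ⟨M.one, (M.zero_ne_one hs).symm⟩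
  exact ⟨p, hp, fun y => M.le_of_ne_zero_of_minimal hs fun q hq => hmin hq⟩

section Multiples

variable {M} {p : A}

theorem eq_nsmul_or_nsmul_succ_le (hp : ∀ y, y ≠ M.zero → M.le p y) {k : ℕ} {x : A}
    (hkx : M.le (M.nsmul k p) x) : x = M.nsmul k p ∨ M.le (M.nsmul (k + 1) p) x := by
  by_cases hsub : M.sub x (M.nsmul k p) = M.zero
  · exact Or.inl (M.le_antisymm (M.sub_eq_zero_iff_le.1 hsub) hkx)
  · right
    have h := M.oplus_le_oplus (hp _ hsub) (M.le_refl (M.nsmul k p))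
    rwa [M.sub_oplus_cancel hkx, ← nsmul_succ] at h

theorem exists_nsmul_eq_or_nsmul_le (hp : ∀ y, y ≠ M.zero → M.le p y) (x : A) (k : ℕ) :
    (∃ j < k, M.nsmul j p = x) ∨ M.le (M.nsmul k p) x := by
  induction k with
  | zero => exact Or.inr (M.zero_le x)
  | succ k ih =>
    rcases ih with ⟨j, hj, hjx⟩ | hkx
    · exact Or.inl ⟨j, by omega, hjx⟩
    · rcases eq_nsmul_or_nsmul_succ_le hp hkx with hx | hx
      · exact Or.inl ⟨k, k.lt_succ_self, hx.symm⟩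
      · exact Or.inr hx

theorem exists_nsmul_eq (hp : ∀ y, y ≠ M.zero → M.le p y) {n : ℕ}
    (hn : M.nsmul n p = M.one) (x : A) : ∃ k ≤ n, M.nsmul k p = x := by
  rcases exists_nsmul_eq_or_nsmul_le hp x n with ⟨j, hj, hjx⟩ | hnx
  · exact ⟨j, hj.le, hjx⟩
  · exact ⟨n, le_rfl, by rw [hn]; exact (M.eq_one_of_one_le (hn ▸ hnx)).symm⟩

variable {n : ℕ}

theorem nsmul_ne_nsmul (hn : ∀ k, M.nsmul k p = M.one ↔ n ≤ k) {i j : ℕ} (hij : i < j)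
    (hjn : j ≤ n) : M.nsmul i p ≠ M.nsmul j p := by
  intro h
  have hsucc : M.nsmul (i + 1) p = M.nsmul i p :=
    M.le_antisymm (h ▸ M.nsmul_le_nsmul p hij) (M.nsmul_le_nsmul p i.le_succ)
  have hi : M.nsmul i p = M.one := by
    rw [← M.nsmul_eq_of_nsmul_succ_eq hsucc (Nat.le_add_right i n)]
    exact (hn _).2 (Nat.le_add_left n i)
  have := (hn i).1 hi
  omega

theorem nsmul_injOn (hn : ∀ k, M.nsmul k p = M.one ↔ n ≤ k) {i j : ℕ} (hi : i ≤ n) (hj : j ≤ n)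
    (h : M.nsmul i p = M.nsmul j p) : i = j := by
  rcases lt_trichotomy i j with hij | hij | hij
  · exact absurd h (nsmul_ne_nsmul hn hij hj)
  · exact hij
  · exact absurd h.symm (nsmul_ne_nsmul hn hij hi)

theorem oplus_nsmul (hn : ∀ k, M.nsmul k p = M.one ↔ n ≤ k) (i j : ℕ) :
    M.oplus (M.nsmul i p) (M.nsmul j p) = M.nsmul (min n (i + j)) p := by
  rw [← nsmul_add]
  rcases le_total (i + j) n with h | h
  · rw [min_eq_right h]
  · rw [min_eq_left h, (hn _).2 h, (hn _).2 le_rfl]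

theorem neg_nsmul (hn : ∀ k, M.nsmul k p = M.one ↔ n ≤ k)
    (hsurj : ∀ x, ∃ k ≤ n, M.nsmul k p = x) {j : ℕ} (hj : j ≤ n) :
    M.neg (M.nsmul j p) = M.nsmul (n - j) p := by
  obtain ⟨m, -, hm⟩ := hsurj (M.neg (M.nsmul j p))
  have hjm : n ≤ j + m := (hn _).1 (by rw [nsmul_add, hm, M.mv2, neg_oplus_self])
  refine M.le_antisymm (M.neg_le_iff.2 ?_) (hm ▸ M.nsmul_le_nsmul p (by omega))
  rw [← nsmul_add, (hn _).2 (by omega)]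

end Multiples

variable {M}

theorem exists_bijective_hom_luk {n : ℕ+} {p : A}
    (hn : ∀ k, M.nsmul k p = M.one ↔ (n : ℕ) ≤ k) (hsurj : ∀ x, ∃ k ≤ (n : ℕ), M.nsmul k p = x) :
    ∃ f : A → Luk n, Function.Bijective f ∧
      (∀ x y, f (M.oplus x y) = lukOplus (f x) (f y)) ∧
      (∀ x, f (M.neg x) = lukNeg (f x)) ∧
      f M.zero = lukZero n := by
  have hneg : ∀ j ≤ (n : ℕ), M.neg (M.nsmul j p) = M.nsmul (n - j) p :=
    fun _ => neg_nsmul hn hsurj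
  choose idx hidx_le hidx using hsurj
  set f : A → Luk n := fun x => lukOfNat n (idx x) (hidx_le x)
  have f_nsmul : ∀ k (hk : k ≤ (n : ℕ)), f (M.nsmul k p) = lukOfNat n k hk := fun k hk => by
    have : idx (M.nsmul k p) = k := nsmul_injOn hn (hidx_le _) hk (hidx _)
    simp only [f, this]
  refine ⟨f, ⟨fun x y hxy => ?_, ?_⟩, fun x y => ?_, fun x => ?_, ?_⟩
  · rw [← hidx x, ← hidx y, lukOfNat_inj.1 hxy]
  · rintro ⟨q, k, hk, rfl⟩
    exact ⟨M.nsmul k p, f_nsmul k hk⟩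
  · rw [← hidx x, ← hidx y, oplus_nsmul hn, f_nsmul _ (min_le_left _ _), f_nsmul _ (hidx_le x),
      f_nsmul _ (hidx_le y), lukOplus_lukOfNat]
  · rw [← hidx x, hneg _ (hidx_le x), f_nsmul _ (Nat.sub_le _ _), f_nsmul _ (hidx_le x),
      lukNeg_lukOfNat]
  · rw [lukZero_eq, ← f_nsmul 0 (Nat.zero_le _)]
    rfl

end MVAlgebra

/-- Every finite simple MV-algebra is isomorphic to Łₙ for some n ≥ 1. -/
theorem finite_simple_iso_luk {A : Type u} [Finite A] (M : MVAlgebra A)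
    (h : IsSimpleMV M) :
    ∃ (n : ℕ+) (f : A → Luk n), Function.Bijective f ∧
      (∀ x y, f (M.oplus x y) = lukOplus (f x) (f y)) ∧
      (∀ x, f (M.neg x) = lukNeg (f x)) ∧
      f M.zero = lukZero n := by
  classical
  obtain ⟨p, hp0, hp⟩ := M.exists_least_ne_zero h
  have hex : ∃ k, M.nsmul k p = M.one := M.exists_nsmul_eq_one h hp0
  have hn : ∀ k, M.nsmul k p = M.one ↔ Nat.find hex ≤ k := fun k =>
    ⟨Nat.find_min' hex, M.nsmul_eq_one_of_le (Nat.find_spec hex)⟩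
  have hpos : 0 < Nat.find hex := (Nat.find_pos hex).2 (M.zero_ne_one h)
  exact ⟨⟨Nat.find hex, hpos⟩,
    MVAlgebra.exists_bijective_hom_luk hn (MVAlgebra.exists_nsmul_eq hp (Nat.find_spec hex))⟩
end

section
/- Every homomorphism from a finite product of Łukasiewicz chains into a Łukasiewicz chain factors through a coordinate projection: let l ≥ 1, let n : Fin l → ℕ be positive, let m ≥ 1, and let γ : (∏_{i<l} Ł_{n_i}) → Łₘ be a homomorphism of MV-algebras (product with componentwise operations). Then there exists k < l such that γ a = γ b whenever a k = b k, and moreover n_k divides m. -/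
def lukOne (n : ℕ+) : Luk n := lukNeg (lukZero n)

namespace Luk

variable {n : ℕ+}

lemma val_nonneg (x : Luk n) : 0 ≤ x.1 := by
  obtain ⟨k, -, hx⟩ := x.2
  rw [hx]
  positivity

lemma val_le_one (x : Luk n) : x.1 ≤ 1 := by
  obtain ⟨k, hk, hx⟩ := x.2
  rw [hx, div_le_one (by exact_mod_cast n.pos)]
  exact_mod_cast hk

@[simp] lemma val_lukZero : (lukZero n).1 = 0 := rfl

@[simp] lemma val_lukOne : (lukOne n).1 = 1 := sub_zero 1

@[simp] lemma val_lukNeg (x : Luk n) : (lukNeg x).1 = 1 - x.1 := rfl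

@[simp] lemma val_lukOplus (x y : Luk n) : (lukOplus x y).1 = min 1 (x.1 + y.1) := rfl

@[simp] lemma lukNeg_lukZero : lukNeg (lukZero n) = lukOne n := rfl

@[simp] lemma lukNeg_lukOne : lukNeg (lukOne n) = lukZero n :=
  Subtype.ext (by simp)

@[simp] lemma lukOplus_lukZero (x : Luk n) : lukOplus x (lukZero n) = x :=
  Subtype.ext (by simp [x.val_le_one])

@[simp] lemma lukOplus_lukOne (x : Luk n) : lukOplus x (lukOne n) = lukOne n :=
  Subtype.ext (by simp [x.val_nonneg])

lemma eq_lukZero_or_eq_lukOne_of_lukOplus_self {x : Luk n} (h : lukOplus x x = x) :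
    x = lukZero n ∨ x = lukOne n := by
  have h := congrArg Subtype.val h
  rw [val_lukOplus] at h
  rcases min_cases 1 (x.1 + x.1) with ⟨hmin, -⟩ | ⟨hmin, -⟩
  · exact .inr (Subtype.ext (by rw [val_lukOne, ← h, hmin]))
  · exact .inl (Subtype.ext (by simp only [val_lukZero]; linarith))

def nsmul : ℕ → Luk n → Luk n
  | 0, _ => lukZero n
  | j + 1, v => lukOplus (nsmul j v) v

lemma val_nsmul (j : ℕ) (v : Luk n) : (nsmul j v).1 = min 1 (j * v.1) := by
  induction j with
  | zero => simp [nsmul]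
  | succ j ih =>
    rw [nsmul, val_lukOplus, ih, Nat.cast_succ, add_one_mul, ← min_add_add_right, ← min_assoc,
      min_eq_left (le_add_of_nonneg_right v.val_nonneg)]

lemma map_nsmul {M : ℕ+} (φ : Luk n → Luk M)
    (hop : ∀ x y, φ (lukOplus x y) = lukOplus (φ x) (φ y)) (hz : φ (lukZero n) = lukZero M)
    (j : ℕ) (v : Luk n) : φ (nsmul j v) = nsmul j (φ v) := by
  induction j with
  | zero => exact hz
  | succ j ih => rw [nsmul, hop, ih, nsmul]

def atom (n : ℕ+) : Luk n := ⟨1 / (n : ℕ), 1, n.pos, by rw [Nat.cast_one]⟩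

@[simp] lemma val_atom : (atom n).1 = 1 / (n : ℕ) := rfl

lemma nsmul_pred_atom : nsmul ((n : ℕ) - 1) (atom n) = lukNeg (atom n) := by
  have hn : (0 : ℚ) < (n : ℕ) := by exact_mod_cast n.pos
  apply Subtype.ext
  rw [val_nsmul, val_lukNeg, val_atom, Nat.cast_pred n.pos, sub_one_mul,
    mul_one_div_cancel hn.ne']
  exact min_eq_right (by linarith [one_div_pos.mpr hn])

theorem dvd_of_hom {N M : ℕ+} (φ : Luk N → Luk M)
    (hop : ∀ x y, φ (lukOplus x y) = lukOplus (φ x) (φ y))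
    (hneg : ∀ x, φ (lukNeg x) = lukNeg (φ x))
    (hz : φ (lukZero N) = lukZero M) : (N : ℕ) ∣ (M : ℕ) := by
  have hM : (0 : ℚ) < (M : ℕ) := by exact_mod_cast M.pos
  obtain ⟨t, -, ht⟩ := (φ (atom N)).2
  have himage := congrArg (fun x => (φ x).1) (nsmul_pred_atom (n := N))
  simp only [map_nsmul φ hop hz, hneg, val_nsmul, val_lukNeg, ht] at himage
  rcases min_cases (1 : ℚ) (((N : ℕ) - 1 : ℕ) * (t / (M : ℕ))) with ⟨hmin, -⟩ | ⟨hmin, -⟩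
  · rw [hmin, eq_comm, sub_eq_self, div_eq_zero_iff] at himage
    norm_num [hM.ne'] at himage
    simp [himage] at hmin
  · rw [hmin, Nat.cast_pred N.pos] at himage
    field_simp at himage
    exact ⟨t, by exact_mod_cast (by linarith : ((M : ℕ) : ℚ) = (N : ℕ) * t)⟩

end Luk

section Product

variable {ι : Type*} [DecidableEq ι] {n : ι → ℕ+} {m : ℕ+}

def lukIndicator (n : ι → ℕ+) (S : Finset ι) : ∀ i, Luk (n i) :=
  fun i => if i ∈ S then lukOne (n i) else lukZero (n i)

lemma lukIndicator_union (S T : Finset ι) :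
    lukIndicator n (S ∪ T) = fun i => lukOplus (lukIndicator n S i) (lukIndicator n T i) := by
  funext i
  by_cases hS : i ∈ S <;> by_cases hT : i ∈ T <;> simp [lukIndicator, hS, hT]

variable (γ : (∀ i, Luk (n i)) → Luk m)
  (hop : ∀ x y, γ (fun i => lukOplus (x i) (y i)) = lukOplus (γ x) (γ y))
  (hneg : ∀ x, γ (fun i => lukNeg (x i)) = lukNeg (γ x))
  (hz : γ (fun i => lukZero (n i)) = lukZero m)
include hop

lemma map_lukIndicator_eq_lukZero_or_eq_lukOne (S : Finset ι) :
    γ (lukIndicator n S) = lukZero m ∨ γ (lukIndicator n S) = lukOne m := by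
  refine Luk.eq_lukZero_or_eq_lukOne_of_lukOplus_self ?_
  rw [← hop, ← lukIndicator_union, Finset.union_self]

include hneg hz in
lemma exists_map_lukIndicator_singleton_eq_lukOne [Fintype ι] :
    ∃ k, γ (lukIndicator n {k}) = lukOne m := by
  by_contra! hne
  have hzero (S : Finset ι) : γ (lukIndicator n S) = lukZero m := by
    induction S using Finset.induction with
    | empty => exact hz
    | insert a S _ ih =>
      rw [Finset.insert_eq, lukIndicator_union, hop, ih,
        (map_lukIndicator_eq_lukZero_or_eq_lukOne γ hop {a}).resolve_right (hne a)]
      exact Luk.lukOplus_lukZero _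
  have hone : γ (lukIndicator n Finset.univ) = lukOne m := by
    have huniv : lukIndicator n Finset.univ = fun i => lukOne (n i) :=
      funext fun i => if_pos (Finset.mem_univ i)
    simpa [huniv, hz] using hneg fun i => lukZero (n i)
  have := congrArg Subtype.val ((hzero Finset.univ).symm.trans hone)
  norm_num at this

include hneg in
lemma map_eq_of_apply_eq {k : ι} (hk : γ (lukIndicator n {k}) = lukOne m) {a b : ∀ i, Luk (n i)}
    (hab : a k = b k) : γ a = γ b := by
  have hshift (c : ∀ i, Luk (n i)) :
      γ (fun i => lukOplus (c i) (lukNeg (lukIndicator n {k} i))) = γ c := by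
    rw [hop, hneg, hk, Luk.lukNeg_lukOne, Luk.lukOplus_lukZero]
  rw [← hshift a, ← hshift b]
  congr 1
  funext i
  by_cases hi : i = k
  · subst hi
    rw [hab]
  · simp [lukIndicator, hi]

end Product

theorem hom_from_prod_factors_general (l : ℕ) (n : Fin l → ℕ+) (m : ℕ+)
    (γ : (∀ i, Luk (n i)) → Luk m)
    (hop : ∀ x y, γ (fun i => lukOplus (x i) (y i)) = lukOplus (γ x) (γ y))
    (hneg : ∀ x, γ (fun i => lukNeg (x i)) = lukNeg (γ x))
    (hz : γ (fun i => lukZero (n i)) = lukZero m) :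
    ∃ k : Fin l, (∀ a b, a k = b k → γ a = γ b) ∧ ((n k : ℕ) ∣ (m : ℕ)) := by
  obtain ⟨k, hk⟩ := exists_map_lukIndicator_singleton_eq_lukOne γ hop hneg hz
  have hfac (a b : ∀ i, Luk (n i)) (hab : a k = b k) : γ a = γ b :=
    map_eq_of_apply_eq γ hop hneg hk hab
  refine ⟨k, hfac, ?_⟩
  let e : Luk (n k) → ∀ i, Luk (n i) := Function.update (fun i => lukZero (n i)) k
  refine Luk.dvd_of_hom (γ ∘ e) (fun x y => ?_) (fun x => ?_) ?_
  · exact (hfac _ _ (by simp [e])).trans (hop _ _)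
  · exact (hfac _ _ (by simp [e])).trans (hneg _)
  · exact (hfac _ _ (by simp [e])).trans hz

/-- Every homomorphism from a finite product of Łukasiewicz chains into a
Łukasiewicz chain factors through a coordinate projection, and the corresponding
n_k divides m. -/
theorem hom_from_prod_factors (l : ℕ) (hl : 1 ≤ l) (n : Fin l → ℕ+) (m : ℕ+)
    (γ : (∀ i, Luk (n i)) → Luk m)
    (hop : ∀ x y, γ (fun i => lukOplus (x i) (y i)) = lukOplus (γ x) (γ y))
    (hneg : ∀ x, γ (fun i => lukNeg (x i)) = lukNeg (γ x))
    (hz : γ (fun i => lukZero (n i)) = lukZero m) :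
    ∃ k : Fin l, (∀ a b, a k = b k → γ a = γ b) ∧ ((n k : ℕ) ∣ (m : ℕ)) :=
  hom_from_prod_factors_general l n m γ hop hneg hz
end
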